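/- The free groupoid on the category D with two objects 0, 1 and two parallel non-identity morphisms a, b : 0 → 1 has automorphism group of the object 0 isomorphic to the free group on one generator ℤ. -/

import Mathlib

open CategoryTheory

/-- The quiver with two vertices `false`, `true` and two parallel edges `false ⇉ true`. -/
instance : Quiver Bool :=
  ⟨fun a b => match a, b with
    | false, true => Fin 2
    | _, _ => Empty⟩

/-- The category `D` freely generated by two parallel arrows `a, b : 0 → 1`. -/
abbrev TwoParallelArrows : Type := CategoryTheory.Paths Bool

/-!
Counting the occurrences of the second arrow gives a winding-number functor from the
localization to `ℤ`, viewed as a one-object groupoid; it sends the loop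
`arrow 1 ≫ (arrow 0)⁻¹` at `0` to the generator. Conversely `n ↦ loop ^ n` is a functor back.
Transporting every object to `0` along `arrow 0` (a spanning tree) gives a natural
transformation from the identity to the composite whose component at `0` is the identity, and
its naturality at an automorphism `α` of `0` reads `α = loop ^ winding α`. Hence the winding
number is injective on `Aut 0`, and it is surjective because it hits the generator.
-/

theorem CategoryTheory.MorphismProperty.isInvertedBy_top_of_groupoid {C D : Type*} [Category C]
    [Groupoid D] (F : C ⥤ D) : (⊤ : MorphismProperty C).IsInvertedBy F :=
  fun _ _ _ _ => inferInstance

namespace TwoParallelArrows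

open Localization.Construction

noncomputable section

abbrev L := (⊤ : MorphismProperty TwoParallelArrows).Localization
abbrev Q := (⊤ : MorphismProperty TwoParallelArrows).Q

def arrow (i : Fin 2) : (Paths.of Bool).obj false ⟶ (Paths.of Bool).obj true :=
  (Paths.of Bool).map (X := false) (Y := true) i

def windingPrefunctor : Bool ⥤q SingleObj (Multiplicative ℤ) where
  obj _ := SingleObj.star _
  map {X Y} e := match X, Y, e with
    | false, true, i => Multiplicative.ofAdd ((show Fin 2 from i) : ℤ)

def winding : L ⥤ SingleObj (Multiplicative ℤ) :=
  lift (Paths.lift windingPrefunctor) (MorphismProperty.isInvertedBy_top_of_groupoid _)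

lemma winding_map_Q_arrow (i : Fin 2) :
    winding.map (Q.map (arrow i)) = (Multiplicative.ofAdd (i : ℤ) : Multiplicative ℤ) := by
  have h := Functor.congr_hom (fac (Paths.lift windingPrefunctor)
    (MorphismProperty.isInvertedBy_top_of_groupoid _)) (arrow i)
  simp only [Functor.comp_map, eqToHom_refl, Category.id_comp, Category.comp_id] at h
  exact h.trans (Paths.lift_toPath _ _)

lemma winding_map_wIso_inv {X Y : TwoParallelArrows} (f : X ⟶ Y) :
    winding.map (wIso f trivial).inv = (show Multiplicative ℤ from winding.map (Q.map f))⁻¹ :=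
  eq_inv_of_mul_eq_one_right (winding.mapIso (wIso f trivial)).hom_inv_id

def loop : Aut (Q.obj ((Paths.of Bool).obj false)) :=
  wIso (arrow 1) trivial ≪≫ (wIso (arrow 0) trivial).symm

def loopPowers : SingleObj (Multiplicative ℤ) ⥤ L :=
  SingleObj.functor ((Aut.toEnd _).comp (zpowersHom _ loop))

lemma loopPowers_map {X Y : SingleObj (Multiplicative ℤ)} (m : X ⟶ Y) :
    loopPowers.map m = (loop ^ Multiplicative.toAdd m).hom := rfl

def windingAut : Aut (Q.obj ((Paths.of Bool).obj false)) →* Multiplicative ℤ :=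
  (SingleObj.toEnd _).symm.toMonoidHom.comp ((winding.mapEnd _).comp (Aut.toEnd _))

lemma windingAut_loop : windingAut loop = Multiplicative.ofAdd 1 := by
  change winding.map (Q.map (arrow 1) ≫ (wIso (arrow 0) trivial).inv) = _
  rw [Functor.map_comp, winding_map_wIso_inv, winding_map_Q_arrow, winding_map_Q_arrow]
  rfl

lemma Q_map_arrow_comp_inv (i : Fin 2) :
    Q.map (arrow i) ≫ (wIso (arrow 0) trivial).inv = (loop ^ (i : ℤ)).hom := by
  revert i
  rw [Fin.forall_fin_two]
  constructor
  · exact (wIso (arrow 0) trivial).hom_inv_id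
  · rw [Fin.val_one, Nat.cast_one, zpow_one]
    rfl

def idToWindingLoopPowers : 𝟭 L ⟶ winding ⋙ loopPowers :=
  natTransExtension <| Paths.liftNatTrans
    (fun v => match v with
      | false => 𝟙 _
      | true => (wIso (arrow 0) trivial).inv)
    (by
      rintro (_ | _) (_ | _) i
      · exact Empty.elim i
      · change Q.map (arrow i) ≫ (wIso (arrow 0) trivial).inv =
          𝟙 _ ≫ loopPowers.map (winding.map (Q.map (arrow i)))
        rw [winding_map_Q_arrow, Category.id_comp, loopPowers_map, toAdd_ofAdd]
        exact Q_map_arrow_comp_inv i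
      · exact Empty.elim i
      · exact Empty.elim i)

lemma idToWindingLoopPowers_app_false :
    idToWindingLoopPowers.app (Q.obj ((Paths.of Bool).obj false)) = 𝟙 _ :=
  NatTransExtension.app_eq _ _

lemma eq_loopPowers_map_winding_map
    (f : Q.obj ((Paths.of Bool).obj false) ⟶ Q.obj ((Paths.of Bool).obj false)) :
    f = loopPowers.map (winding.map f) := by
  have h := idToWindingLoopPowers.naturality f
  rw [Functor.id_map, idToWindingLoopPowers_app_false] at h
  exact (Category.comp_id f).symm.trans (h.trans (Category.id_comp _))

lemma eq_loop_zpow_windingAut (α : Aut (Q.obj ((Paths.of Bool).obj false))) :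
    α = loop ^ (windingAut α).toAdd :=
  Iso.ext (eq_loopPowers_map_winding_map α.hom)

lemma windingAut_bijective : Function.Bijective windingAut := by
  refine ⟨fun α β h => ?_, fun m => ⟨loop ^ m.toAdd, ?_⟩⟩
  · rw [eq_loop_zpow_windingAut α, eq_loop_zpow_windingAut β, h]
  · rw [map_zpow, windingAut_loop, ← ofAdd_zsmul, smul_eq_mul, mul_one, ofAdd_toAdd]

end

end TwoParallelArrows

/-- The free groupoid on the category `D` with two objects `0`, `1` and two parallel
non-identity morphisms `a, b : 0 → 1` (i.e. the localization of `D` at all of its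
morphisms) has automorphism group of the object `0` isomorphic to the free group on
one generator, i.e. to `ℤ`. -/
theorem aut_free_groupoid_twoParallelArrows :
    Nonempty
      (Aut ((⊤ : MorphismProperty TwoParallelArrows).Q.obj
          (show TwoParallelArrows from false)) ≃* Multiplicative ℤ) :=
  ⟨MulEquiv.ofBijective _ TwoParallelArrows.windingAut_bijective⟩
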